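/- arXiv:2310.08649 — 2 statements merged into one kernel-verified Lean document; each statement's English description precedes it below -/
import Mathlib

section
/- Let n ≥ 2, d ≥ 1, let A_1, …, A_n ∈ ℝ^{d×d} be invertible, let B_1, …, B_{n−1} ∈ ℝ^{d×d} (with the conventions B_0 = 0 and x_0 = 0), and let y_1, …, y_n ∈ ℝ^d. Then (x_1, …, x_n) ∈ (ℝ^d)^n solves the original block lower-bidiagonal system A_1 x_1 = y_1, A_k x_k + B_{k−1} x_{k−1} = y_k (k = 2, …, n) if and only if it solves the reduced system A_1 x_1 = y_1, A_k x_k − B_{k−1} A_{k−1}^{−1} B_{k−2} x_{k−2} = y_k − B_{k−1} A_{k−1}^{−1} y_{k−1} (k = 2, …, n); that is, one parallel cyclic reduction step preserves the solution set of the system. -/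
open Matrix

/-- The block lower-bidiagonal system with data `(A, B, y)` in the unknowns
`x 0, …, x (n-1)` (`0`-indexed): `A 0 *ᵥ x 0 = y 0` and
`A (j+1) *ᵥ x (j+1) + B j *ᵥ x j = y (j+1)` for `j + 1 < n`. -/
def BlockBidiagSystem (n d : ℕ) (A B : ℕ → Matrix (Fin d) (Fin d) ℝ)
    (y x : ℕ → Fin d → ℝ) : Prop :=
  A 0 *ᵥ x 0 = y 0 ∧ ∀ j, j + 1 < n → A (j + 1) *ᵥ x (j + 1) + B j *ᵥ x j = y (j + 1)

/-- **A parallel cyclic reduction step preserves the solution set.**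

With all diagonal blocks invertible, `x` solves the original block lower-bidiagonal
system if and only if it solves the reduced system consisting of `A 0 *ᵥ x 0 = y 0`
together with, for each `j + 1 < n` (the equations `k = 2, …, n` in `1`-indexed form),
`A (j+1) *ᵥ x (j+1) − (B j * (A j)⁻¹ * B (j-1)) *ᵥ x (j-1) =
  y (j+1) − (B j * (A j)⁻¹) *ᵥ y j`,
where the `x (j-1)` term is taken to be `0` for `j = 0` (the conventions `B_0 = 0`
and `x_0 = 0`). -/
theorem cyclic_reduction_step_preserves_solutions
    (n d : ℕ) (hn : 2 ≤ n) (hd : 1 ≤ d)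
    (A B : ℕ → Matrix (Fin d) (Fin d) ℝ)
    (hA : ∀ k < n, IsUnit (A k))
    (y x : ℕ → Fin d → ℝ) :
    BlockBidiagSystem n d A B y x ↔
      (A 0 *ᵥ x 0 = y 0 ∧
        ∀ j, j + 1 < n →
          A (j + 1) *ᵥ x (j + 1)
              - (if j = 0 then 0 else (B j * (A j)⁻¹ * B (j - 1)) *ᵥ x (j - 1))
            = y (j + 1) - (B j * (A j)⁻¹) *ᵥ y j) := by
  have hinv : ∀ k < n, B k * (A k)⁻¹ * A k = B k := fun k hk => by
    rw [mul_assoc, Matrix.nonsing_inv_mul _ ((Matrix.isUnit_iff_isUnit_det _).mp (hA k hk)),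
      mul_one]
  constructor
  · rintro ⟨h0, hrec⟩
    refine ⟨h0, fun j hj => ?_⟩
    match j with
    | 0 =>
      rw [if_pos rfl, ← h0, ← hrec 0 hj, mulVec_mulVec, hinv 0 (by omega)]
      abel
    | (m + 1) =>
      rw [if_neg (by omega), ← hrec (m + 1) hj, ← hrec m (by omega),
        Nat.add_sub_cancel, mulVec_add, mulVec_mulVec, mulVec_mulVec,
        hinv (m + 1) (by omega)]
      abel
  · rintro ⟨h0, hred⟩
    have key : ∀ j, j < n →
        A j *ᵥ x j + (if j = 0 then (0 : Fin d → ℝ) else B (j - 1) *ᵥ x (j - 1)) = y j := by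
      intro j
      induction j with
      | zero => intro _; simpa using h0
      | succ m ih =>
        intro hm
        have hred' := hred m (by omega)
        have ihm := ih (by omega)
        rw [if_neg (by omega), Nat.add_sub_cancel]
        match m with
        | 0 =>
          rw [if_pos rfl, add_zero] at ihm
          rw [if_pos rfl, sub_zero, ← ihm, mulVec_mulVec, hinv 0 (by omega)] at hred'
          linear_combination hred'
        | (k + 1) =>
          rw [if_neg (by omega), Nat.add_sub_cancel] at ihm
          rw [if_neg (by omega), Nat.add_sub_cancel, ← ihm, mulVec_add,
            mulVec_mulVec, mulVec_mulVec, hinv (k + 1) (by omega)] at hred'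
          linear_combination hred'
    refine ⟨h0, fun j hj => ?_⟩
    have := key (j + 1) (by omega)
    rw [if_neg (by omega), Nat.add_sub_cancel] at this
    exact this
end

section
/- Let n ≥ 2, d ≥ 1, let A_1, …, A_n ∈ ℝ^{d×d} be invertible, let B_1, …, B_{n−1} ∈ ℝ^{d×d} (with the conventions B_0 = 0 and x_0 = 0), and suppose (x_1, …, x_n) solves the block lower-bidiagonal system A_1 x_1 = y_1, A_k x_k + B_{k−1} x_{k−1} = y_k (k = 2, …, n). Then the reduced system splits into two independent block lower-bidiagonal systems of half the size: (i) the even-indexed unknowns z_m := x_{2m}, for m = 1, …, ⌊n/2⌋, solve the block lower-bidiagonal system with diagonal blocks Â_m = A_{2m}, subdiagonal blocks B̂_m = −B_{2m+1} A_{2m+1}^{−1} B_{2m}, and right-hand sides ŷ_m = y_{2m} − B_{2m−1} A_{2m−1}^{−1} y_{2m−1}; and (ii) the odd-indexed unknowns w_m := x_{2m−1}, for m = 1, …, ⌈n/2⌉, solve the block lower-bidiagonal system with diagonal blocks Ã_m = A_{2m−1}, subdiagonal blocks B̃_m = −B_{2m} A_{2m}^{−1} B_{2m−1}, and right-hand sides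 ỹ_1 = y_1 and ỹ_m = y_{2m−1} − B_{2m−2} A_{2m−2}^{−1} y_{2m−2} for m ≥ 2. -/
open Matrix

lemma pcr_key {d : ℕ} (M N : Matrix (Fin d) (Fin d) ℝ) (hM : IsUnit M)
    (v u : Fin d → ℝ) (h : M *ᵥ v = u) : N *ᵥ v = (N * M⁻¹) *ᵥ u := by
  have h1 : M⁻¹ * M = 1 := nonsing_inv_mul M ((isUnit_iff_isUnit_det M).mp hM)
  calc N *ᵥ v = (N * (M⁻¹ * M)) *ᵥ v := by rw [h1, mul_one]
    _ = (N * M⁻¹) *ᵥ (M *ᵥ v) := by rw [← mul_assoc, ← mulVec_mulVec]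
    _ = _ := by rw [h]

lemma pcr_step {n d : ℕ} (A B : ℕ → Matrix (Fin d) (Fin d) ℝ) (y x : ℕ → Fin d → ℝ)
    (hrec : ∀ j, j + 1 < n → A (j + 1) *ᵥ x (j + 1) + B j *ᵥ x j = y (j + 1))
    (k : ℕ) (hk : k + 2 < n) (hAk : IsUnit (A (k + 1))) :
    A (k + 2) *ᵥ x (k + 2) + (-(B (k + 1) * (A (k + 1))⁻¹ * B k)) *ᵥ x k
      = y (k + 2) - (B (k + 1) * (A (k + 1))⁻¹) *ᵥ y (k + 1) := by
  have e2 := hrec (k + 1) hk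
  have h3 : A (k + 1) *ᵥ x (k + 1) = y (k + 1) - B k *ᵥ x k :=
    eq_sub_of_add_eq (hrec k (by omega))
  have h4 : B (k + 1) *ᵥ x (k + 1)
      = (B (k + 1) * (A (k + 1))⁻¹) *ᵥ (y (k + 1) - B k *ᵥ x k) :=
    pcr_key _ _ hAk _ _ h3
  rw [mulVec_sub, mulVec_mulVec] at h4
  have e2' : A (k + 2) *ᵥ x (k + 2) = y (k + 2) - B (k + 1) *ᵥ x (k + 1) :=
    eq_sub_of_add_eq e2
  rw [neg_mulVec, e2', h4, mul_assoc]
  abel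


/-- **Parallel cyclic reduction splits the system into two independent half-size systems.**

Everything is `0`-indexed, so the `1`-indexed unknowns `x_1, …, x_n` of the natural
language statement are `x 0, …, x (n-1)`, with `x_k = x (k-1)`, `A_k = A (k-1)`,
`B_k = B (k-1)`, `y_k = y (k-1)`.

If `x` solves the block lower-bidiagonal system of size `n` with all diagonal blocks
invertible, then:
(i) the even-indexed unknowns `z m := x (2*m+1)` (`1`-indexed: `x_{2m}`, `m = 1, …, ⌊n/2⌋`)
solve the block lower-bidiagonal system of size `n / 2` with diagonal blocks `A (2*m+1)`
(`1`-indexed `A_{2m}`), subdiagonal blocks `−B (2*m+2) * (A (2*m+2))⁻¹ * B (2*m+1)`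
(`1`-indexed `−B_{2m+1} A_{2m+1}⁻¹ B_{2m}`), and right-hand sides
`y (2*m+1) − B (2*m) * (A (2*m))⁻¹ *ᵥ y (2*m)` (`1`-indexed `y_{2m} − B_{2m−1} A_{2m−1}⁻¹ y_{2m−1}`);
(ii) the odd-indexed unknowns `w m := x (2*m)` (`1`-indexed: `x_{2m−1}`, `m = 1, …, ⌈n/2⌉`)
solve the block lower-bidiagonal system of size `(n+1) / 2` with diagonal blocks `A (2*m)`
(`1`-indexed `A_{2m−1}`), subdiagonal blocks `−B (2*m+1) * (A (2*m+1))⁻¹ * B (2*m)`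
(`1`-indexed `−B_{2m} A_{2m}⁻¹ B_{2m−1}`), first right-hand side `y 0` (`1`-indexed `y_1`)
and subsequent right-hand sides `y (2*m) − B (2*m-1) * (A (2*m-1))⁻¹ *ᵥ y (2*m-1)`
(`1`-indexed `y_{2m−1} − B_{2m−2} A_{2m−2}⁻¹ y_{2m−2}` for `m ≥ 2`). -/
theorem pcr_splits_into_even_and_odd_systems
    (n d : ℕ) (hn : 2 ≤ n) (hd : 1 ≤ d)
    (A B : ℕ → Matrix (Fin d) (Fin d) ℝ)
    (hA : ∀ k < n, IsUnit (A k))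
    (y x : ℕ → Fin d → ℝ)
    (hsys : BlockBidiagSystem n d A B y x) :
    BlockBidiagSystem (n / 2) d
        (fun m => A (2 * m + 1))
        (fun m => -(B (2 * m + 2) * (A (2 * m + 2))⁻¹ * B (2 * m + 1)))
        (fun m => y (2 * m + 1) - (B (2 * m) * (A (2 * m))⁻¹) *ᵥ y (2 * m))
        (fun m => x (2 * m + 1)) ∧
      BlockBidiagSystem ((n + 1) / 2) d
        (fun m => A (2 * m))
        (fun m => -(B (2 * m + 1) * (A (2 * m + 1))⁻¹ * B (2 * m)))
        (fun m => if m = 0 then y 0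
          else y (2 * m) - (B (2 * m - 1) * (A (2 * m - 1))⁻¹) *ᵥ y (2 * m - 1))
        (fun m => x (2 * m)) := by
  obtain ⟨h0, hrec⟩ := hsys
  constructor
  · constructor
    · simp only [mul_zero, zero_add, Nat.mul_zero]
      have e1 := hrec 0 (by omega)
      have hB0 : B 0 *ᵥ x 0 = (B 0 * (A 0)⁻¹) *ᵥ y 0 :=
        pcr_key _ _ (hA 0 (by omega)) _ _ h0
      rw [hB0] at e1
      exact eq_sub_of_add_eq e1
    · intro j hj
      simp only []
      have := pcr_step A B y x hrec (2 * j + 1) (by omega) (hA _ (by omega))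
      have h1 : 2 * (j + 1) + 1 = 2 * j + 1 + 2 := by ring
      have h2 : 2 * (j + 1) = 2 * j + 1 + 1 := by ring
      rw [h1, h2]
      exact this
  · constructor
    · simpa using h0
    · intro j hj
      simp only [Nat.add_eq_zero, and_false, if_false, Nat.succ_ne_zero]
      have := pcr_step A B y x hrec (2 * j) (by omega) (hA _ (by omega))
      have h1 : 2 * (j + 1) = 2 * j + 2 := by ring
      have h2 : 2 * j + 2 - 1 = 2 * j + 1 := by omega
      rw [h1, h2]
      simpa using this
end
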